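/- Let C' be a projective binary linear [n',k',d']_2-code with k' ≥ 2 (a k'-dimensional subspace of F_2^{n'} of minimum Hamming distance at least d'). Then n_2(k'+1, min{2d', n'+1}, 2) ≤ 2n'+1; that is, there exists a binary linear code of length 2n'+1, dimension k'+1, minimum Hamming distance at least min{2d', n'+1}, and locality 2. -/

import Mathlib

open scoped Classical

/-- The Hamming weight of a vector: the number of nonzero coordinates. -/
noncomputable def hamWt {F : Type} [Field F] {n : ℕ} (c : Fin n → F) : ℕ :=
  (Finset.univ.filter fun i => c i ≠ 0).card

/-- `C` is a linear `[n,k,d]` code over `F`: a `k`-dimensional subspace of `F^n`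
in which every nonzero codeword has Hamming weight at least `d`. -/
def IsCode {F : Type} [Field F] {n : ℕ} (k d : ℕ) (C : Submodule F (Fin n → F)) : Prop :=
  Module.finrank F ↥C = k ∧ ∀ c ∈ C, c ≠ 0 → d ≤ hamWt c

/-- `C ⊆ F^n` has locality `r`: every coordinate `i` has a recovery set `S` of at most `r`
other coordinates such that any two codewords agreeing on `S` agree at `i`. -/
def HasLocality {F : Type} [Field F] {n : ℕ} (C : Submodule F (Fin n → F)) (r : ℕ) : Prop :=
  ∀ i : Fin n, ∃ S : Finset (Fin n), i ∉ S ∧ S.card ≤ r ∧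
    ∀ c ∈ C, ∀ c' ∈ C, (∀ j ∈ S, c j = c' j) → c i = c' i

/-- There exists a linear `[n,k,d]_q` code (over some field with `q` elements). -/
def CodeExists (q n k d : ℕ) : Prop :=
  ∃ (F : Type) (_ : Field F), Nat.card F = q ∧
    ∃ C : Submodule F (Fin n → F), IsCode k d C

/-- There exists a linear `[n,k,d]_q` code with locality `r`. -/
def LRCExists (q n k d r : ℕ) : Prop :=
  ∃ (F : Type) (_ : Field F), Nat.card F = q ∧
    ∃ C : Submodule F (Fin n → F), IsCode k d C ∧ HasLocality C r

/-- `n_q(k,d)`: the smallest length of a linear `[n,k,d]_q` code. -/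
noncomputable def nCode (q k d : ℕ) : ℕ := sInf {n | CodeExists q n k d}

/-- `n_q(k,d,r)`: the smallest length of a linear `[n,k,d]_q` code with locality `r`. -/
noncomputable def nLRC (q k d r : ℕ) : ℕ := sInf {n | LRCExists q n k d r}

/-- There exists an `[n,k]_q` code with locality `r` (no condition on minimum distance). -/
def LRCExistsNoDist (q n k r : ℕ) : Prop :=
  ∃ (F : Type) (_ : Field F), Nat.card F = q ∧
    ∃ C : Submodule F (Fin n → F), Module.finrank F ↥C = k ∧ HasLocality C r

/-- `n'_q(k,r)`: the smallest length of an `[n,k]_q` code with locality `r`. -/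
noncomputable def nLRCNoDist (q k r : ℕ) : ℕ := sInf {n | LRCExistsNoDist q n k r}

/-- The dual code of `C`. -/
def dualCode {F : Type} [Field F] {n : ℕ} (C : Submodule F (Fin n → F)) : Set (Fin n → F) :=
  {x | ∀ c ∈ C, ∑ j, x j * c j = 0}

/-- `C` is projective: non-degenerate and no two coordinates are proportional. -/
def IsProjective {F : Type} [Field F] {n : ℕ} (C : Submodule F (Fin n → F)) : Prop :=
  (∀ i : Fin n, ∃ c ∈ C, c i ≠ 0) ∧
    (∀ i j : Fin n, i ≠ j → ∀ lam : F, lam ≠ 0 → ∃ c ∈ C, c i ≠ lam * c j)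

/-- The Griesmer bound `g_q(k,d) = ∑_{i=0}^{k-1} ⌈d/q^i⌉`. -/
noncomputable def griesmer (q k d : ℕ) : ℕ :=
  ∑ i ∈ Finset.range k, ⌈(d : ℚ) / (q : ℚ) ^ i⌉₊

/-!
Take the codewords `(u | u + a·𝟙 | a)` with `u ∈ C` and `a ∈ F`. For `a = 0` the weight is
`2 · wt u ≥ 2d`; for `a ≠ 0` at least one of `u i`, `u i + a` is nonzero for every `i`, and the
last coordinate is nonzero, so the weight is at least `n + 1`. Every coordinate is the sum or
difference of two others (`u i = (u i + a) - a`, `a = (u 0 + a) - u 0`), which gives locality 2.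
-/

section LineCode

variable {F : Type} [Field F]

theorem hamWt_append {m n : ℕ} (u : Fin m → F) (v : Fin n → F) :
    hamWt (Fin.append u v) = hamWt u + hamWt v := by
  simp only [hamWt, Finset.card_filter, Fin.sum_univ_add, Fin.append_left, Fin.append_right]

theorem hamWt_zero {n : ℕ} : hamWt (fun _ : Fin n => (0 : F)) = 0 := by
  simp [hamWt]

theorem hamWt_const {n : ℕ} {a : F} (ha : a ≠ 0) : hamWt (fun _ : Fin n => a) = n := by
  simp [hamWt, ha]

theorem le_hamWt_add_hamWt_add_const {n : ℕ} (u : Fin n → F) {a : F} (ha : a ≠ 0) :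
    n ≤ hamWt u + hamWt (fun i => u i + a) := by
  have hcover : Finset.univ ⊆ (Finset.univ.filter fun i => u i ≠ 0) ∪
      Finset.univ.filter fun i => u i + a ≠ 0 := by
    intro i _
    by_cases hu : u i = 0 <;> simp [hu, ha]
  simpa [hamWt] using (Finset.card_le_card hcover).trans (Finset.card_union_le _ _)

theorem hasLocality_two_of_forall_eq_fun {n : ℕ} {D : Submodule F (Fin n → F)}
    (h : ∀ i, ∃ j k, j ≠ i ∧ k ≠ i ∧ ∃ g : F → F → F, ∀ c ∈ D, c i = g (c j) (c k)) :
    HasLocality D 2 := by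
  intro i
  obtain ⟨j, k, hj, hk, g, hg⟩ := h i
  refine ⟨{j, k}, by simp [hj.symm, hk.symm], Finset.card_le_two, fun c hc c' hc' hcc' => ?_⟩
  rw [hg c hc, hg c' hc', hcc' j (by simp), hcc' k (by simp)]

def lineEncode (n : ℕ) : (Fin n → F) × F →ₗ[F] (Fin (n + n + 1) → F) where
  toFun p := Fin.append (Fin.append p.1 fun i => p.1 i + p.2) fun _ => p.2
  map_add' p q := by
    funext i
    refine Fin.addCases (fun i => Fin.addCases (fun j => ?_) (fun j => ?_) i) (fun _ => ?_) i <;>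
      simp only [Fin.append_left, Fin.append_right, Prod.fst_add, Prod.snd_add, Pi.add_apply,
        add_add_add_comm]
  map_smul' r p := by
    funext i
    refine Fin.addCases (fun i => Fin.addCases (fun j => ?_) (fun j => ?_) i) (fun _ => ?_) i <;>
      simp only [Fin.append_left, Fin.append_right, Prod.smul_fst, Prod.smul_snd, Pi.smul_apply,
        smul_eq_mul, RingHom.id_apply, mul_add]

theorem lineEncode_apply_left {n : ℕ} (p : (Fin n → F) × F) (j : Fin n) :
    lineEncode n p (Fin.castAdd 1 (Fin.castAdd n j)) = p.1 j := by
  simp only [lineEncode, LinearMap.coe_mk, AddHom.coe_mk, Fin.append_left]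

theorem lineEncode_apply_middle {n : ℕ} (p : (Fin n → F) × F) (j : Fin n) :
    lineEncode n p (Fin.castAdd 1 (Fin.natAdd n j)) = p.1 j + p.2 := by
  simp only [lineEncode, LinearMap.coe_mk, AddHom.coe_mk, Fin.append_left, Fin.append_right]

theorem lineEncode_apply_last {n : ℕ} (p : (Fin n → F) × F) (z : Fin 1) :
    lineEncode n p (Fin.natAdd (n + n) z) = p.2 := by
  simp only [lineEncode, LinearMap.coe_mk, AddHom.coe_mk, Fin.append_right]

theorem lineEncode_injective (n : ℕ) : Function.Injective (lineEncode (F := F) n) := by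
  intro p q h
  have h1 : p.1 = q.1 := funext fun j => by
    simpa only [lineEncode_apply_left] using congrFun h (Fin.castAdd 1 (Fin.castAdd n j))
  have h2 : p.2 = q.2 := by
    simpa only [lineEncode_apply_last] using congrFun h (Fin.natAdd (n + n) 0)
  exact Prod.ext h1 h2

theorem hamWt_lineEncode {n : ℕ} (u : Fin n → F) (a : F) :
    hamWt (lineEncode n (u, a)) =
      hamWt u + hamWt (fun i => u i + a) + hamWt (fun _ : Fin 1 => a) := by
  simp only [lineEncode, LinearMap.coe_mk, AddHom.coe_mk, hamWt_append]

def lineCode {n : ℕ} (C : Submodule F (Fin n → F)) : Submodule F (Fin (n + n + 1) → F) :=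
  LinearMap.range (lineEncode n ∘ₗ C.subtype.prodMap LinearMap.id)

variable {n : ℕ} {C : Submodule F (Fin n → F)}

theorem mem_lineCode {c : Fin (n + n + 1) → F} :
    c ∈ lineCode C ↔ ∃ u ∈ C, ∃ a, lineEncode n (u, a) = c := by
  simp [lineCode]

theorem finrank_lineCode : Module.finrank F (lineCode C) = Module.finrank F C + 1 := by
  rw [lineCode, LinearMap.finrank_range_of_inj, Module.finrank_prod, Module.finrank_self]
  exact (lineEncode_injective n).comp (Subtype.val_injective.prodMap Function.injective_id)

theorem min_le_hamWt_lineEncode {d : ℕ} (hd : ∀ u ∈ C, u ≠ 0 → d ≤ hamWt u) {u : Fin n → F}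
    (hu : u ∈ C) {a : F} (hua : lineEncode n (u, a) ≠ 0) :
    min (2 * d) (n + 1) ≤ hamWt (lineEncode n (u, a)) := by
  rw [hamWt_lineEncode]
  by_cases ha : a = 0
  · subst ha
    have hu0 : u ≠ 0 := fun h => hua (by rw [h, Prod.mk_zero_zero, map_zero])
    have hdu := hd u hu hu0
    simp only [add_zero, hamWt_zero]
    change min (2 * d) (n + 1) ≤ hamWt u + hamWt u
    omega
  · have := le_hamWt_add_hamWt_add_const u ha
    rw [hamWt_const ha]
    omega

theorem IsCode.lineCode {k d : ℕ} (hC : IsCode k d C) :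
    IsCode (k + 1) (min (2 * d) (n + 1)) (lineCode C) := by
  refine ⟨hC.1 ▸ finrank_lineCode, ?_⟩
  intro c hc hc0
  obtain ⟨u, hu, a, rfl⟩ := mem_lineCode.1 hc
  exact min_le_hamWt_lineEncode hC.2 hu hc0

theorem hasLocality_lineCode (hn : 0 < n) : HasLocality (lineCode C) 2 := by
  apply hasLocality_two_of_forall_eq_fun
  intro i
  refine Fin.addCases (fun i => Fin.addCases (fun j => ?left) (fun j => ?middle) i)
    (fun z => ?last) i
  case left =>
    refine ⟨Fin.castAdd 1 (Fin.natAdd n j), Fin.natAdd (n + n) 0, ?_, ?_, fun x y => x - y, ?_⟩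
    · simp only [ne_eq, Fin.ext_iff, Fin.val_castAdd, Fin.val_natAdd]; omega
    · simp only [ne_eq, Fin.ext_iff, Fin.val_castAdd, Fin.val_natAdd]; omega
    intro c hc
    obtain ⟨u, -, a, rfl⟩ := mem_lineCode.1 hc
    rw [lineEncode_apply_left, lineEncode_apply_middle, lineEncode_apply_last]
    exact (add_sub_cancel_right (u j) a).symm
  case middle =>
    refine ⟨Fin.castAdd 1 (Fin.castAdd n j), Fin.natAdd (n + n) 0, ?_, ?_, fun x y => x + y, ?_⟩
    · simp only [ne_eq, Fin.ext_iff, Fin.val_castAdd, Fin.val_natAdd]; omega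
    · simp only [ne_eq, Fin.ext_iff, Fin.val_castAdd, Fin.val_natAdd]; omega
    intro c hc
    obtain ⟨u, -, a, rfl⟩ := mem_lineCode.1 hc
    rw [lineEncode_apply_left, lineEncode_apply_middle, lineEncode_apply_last]
  case last =>
    refine ⟨Fin.castAdd 1 (Fin.natAdd n ⟨0, hn⟩), Fin.castAdd 1 (Fin.castAdd n ⟨0, hn⟩), ?_, ?_,
      fun x y => x - y, ?_⟩
    · simp only [ne_eq, Fin.ext_iff, Fin.val_castAdd, Fin.val_natAdd]; omega
    · simp only [ne_eq, Fin.ext_iff, Fin.val_castAdd, Fin.val_natAdd]; omega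
    intro c hc
    obtain ⟨u, -, a, rfl⟩ := mem_lineCode.1 hc
    rw [lineEncode_apply_left, lineEncode_apply_middle, lineEncode_apply_last]
    exact (add_sub_cancel_left (u ⟨0, hn⟩) a).symm

end LineCode

theorem line_construction_general (n' k' d' : ℕ) (hk : 2 ≤ k')
    (C : Submodule (ZMod 2) (Fin n' → ZMod 2)) (hC : IsCode k' d' C) :
    nLRC 2 (k' + 1) (min (2 * d') (n' + 1)) 2 ≤ 2 * n' + 1 ∧
      LRCExists 2 (2 * n' + 1) (k' + 1) (min (2 * d') (n' + 1)) 2 := by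
  have hn : 0 < n' := by
    have := hC.1 ▸ Submodule.finrank_le C
    simp only [Module.finrank_fin_fun] at this
    omega
  have hE : LRCExists 2 (2 * n' + 1) (k' + 1) (min (2 * d') (n' + 1)) 2 := by
    rw [two_mul]
    exact ⟨ZMod 2, inferInstance, Nat.card_zmod 2, lineCode C, hC.lineCode, hasLocality_lineCode hn⟩
  exact ⟨Nat.sInf_le hE, hE⟩

theorem line_construction (n' k' d' : ℕ) (hk : 2 ≤ k')
    (C : Submodule (ZMod 2) (Fin n' → ZMod 2)) (hC : IsCode k' d' C)
    (hproj : IsProjective C) :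
    nLRC 2 (k' + 1) (min (2 * d') (n' + 1)) 2 ≤ 2 * n' + 1 ∧
      LRCExists 2 (2 * n' + 1) (k' + 1) (min (2 * d') (n' + 1)) 2 :=
  line_construction_general n' k' d' hk C hC
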